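/- arXiv:2008.05739 — 3 statements merged into one kernel-verified Lean document; each statement's English description precedes it below -/
import Mathlib

section
/- Let (X,c) be a topological closure space (c² = c). Then the filter generated by the Vietoris relations of interior covers equals the filter generated by the interior-inclusion relations of interior covers, i.e. V_c = R_c. -/
/-- For a topological closure space `(X,c)` (i.e. `c ∘ c = c`), the filter
generated by the Vietoris relations of interior covers equals the filter generated by
the interior-inclusion relations of interior covers: `𝒱_c = ℛ_c`. -/
theorem stmt9 {X : Type*} (c : Set X → Set X)
    (hc0 : c ∅ = ∅) (hc1 : ∀ A : Set X, A ⊆ c A)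
    (hc2 : ∀ A B : Set X, c (A ∪ B) = c A ∪ c B)
    (hidem : ∀ A : Set X, c (c A) = c A) :
    Filter.generate
      {S : Set (X × X) | ∃ 𝒰 : Set (Set X), (⋃ U ∈ 𝒰, (c Uᶜ)ᶜ) = Set.univ ∧
        S = {z : X × X | ∃ U ∈ 𝒰, z.1 ∈ U ∧ z.2 ∈ U}} =
    Filter.generate
      {S : Set (X × X) | ∃ 𝒰 : Set (Set X), (⋃ U ∈ 𝒰, (c Uᶜ)ᶜ) = Set.univ ∧
        S = {z : X × X | ∃ U ∈ 𝒰,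
          (z.1 ∈ (c Uᶜ)ᶜ ∧ z.2 ∈ U) ∨ (z.2 ∈ (c Uᶜ)ᶜ ∧ z.1 ∈ U)}} := by
  have hint : ∀ U : Set X, (c Uᶜ)ᶜ ⊆ U := by
    intro U x hx
    by_contra h
    exact hx (hc1 Uᶜ h)
  apply le_antisymm
  · -- generate V ≤ generate R : each R-generator is in generate V
    rw [Filter.le_generate_iff]
    rintro S ⟨𝒰, h𝒰, rfl⟩
    -- use the cover of interiors
    refine Filter.mem_of_superset
      (Filter.mem_generate_of_mem (U := {z : X × X | ∃ U ∈ (fun U => (c Uᶜ)ᶜ) '' 𝒰,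
        z.1 ∈ U ∧ z.2 ∈ U}) ?_) ?_
    · refine ⟨(fun U => (c Uᶜ)ᶜ) '' 𝒰, ?_, rfl⟩
      rw [← h𝒰]
      ext x
      simp only [Set.mem_iUnion, Set.mem_image, exists_prop]
      constructor
      · rintro ⟨V, ⟨U, hU, rfl⟩, hx⟩
        refine ⟨U, hU, ?_⟩
        rwa [compl_compl, hidem] at hx
      · rintro ⟨U, hU, hx⟩
        exact ⟨(c Uᶜ)ᶜ, ⟨U, hU, rfl⟩, by rwa [compl_compl, hidem]⟩
    · rintro ⟨x, y⟩ ⟨V, ⟨U, hU, rfl⟩, hx, hy⟩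
      exact ⟨U, hU, Or.inl ⟨hx, hint U hy⟩⟩
  · -- generate R ≤ generate V : each V-generator is in generate R
    rw [Filter.le_generate_iff]
    rintro S ⟨𝒰, h𝒰, rfl⟩
    refine Filter.mem_of_superset
      (Filter.mem_generate_of_mem (U := {z : X × X | ∃ U ∈ 𝒰,
        (z.1 ∈ (c Uᶜ)ᶜ ∧ z.2 ∈ U) ∨ (z.2 ∈ (c Uᶜ)ᶜ ∧ z.1 ∈ U)}) ⟨𝒰, h𝒰, rfl⟩) ?_
    rintro ⟨x, y⟩ ⟨U, hU, h⟩
    rcases h with ⟨hx, hy⟩ | ⟨hy, hx⟩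
    · exact ⟨U, hU, hint U hx, hy⟩
    · exact ⟨U, hU, hx, hint U hy⟩
end

section
/- Let X be a set with a symmetric reflexive relation U on X, and let B ⊆ A ⊆ X satisfy U[B] ⊆ A, where U[B] = {y : ∃ b ∈ B, (b,y) ∈ U}. Then every simplex of the Vietoris-Rips complex Σ^X_U lies in Σ^A_{U∩(A×A)} or in Σ^{X−B}_{U∩((X−B)×(X−B))}; that is, Σ^X_U = Σ^A_{U_A} ∪ Σ^{X−B}_{U_{X−B}}. -/
/-- Let `U` be a symmetric reflexive relation on `X` and `B ⊆ A ⊆ X`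
with `U[B] ⊆ A`. Then `Σ^X_U = Σ^A_{U_A} ∪ Σ^{X−B}_{U_{X−B}}`: every simplex of the
clique complex of `U` lies in the clique complex on `A` or in the one on `X \ B`
(and conversely). -/
theorem stmt14 {X : Type*} (U : Set (X × X))
    (hsymm : ∀ x y, (x, y) ∈ U → (y, x) ∈ U)
    (hrefl : ∀ x, (x, x) ∈ U)
    (A B : Set X) (hBA : B ⊆ A)
    (hUB : {y : X | ∃ b ∈ B, (b, y) ∈ U} ⊆ A) :
    {s : Finset X | ∀ x ∈ s, ∀ y ∈ s, (x, y) ∈ U} =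
      {s : Finset X | ↑s ⊆ A ∧ ∀ x ∈ s, ∀ y ∈ s, (x, y) ∈ U ∩ A ×ˢ A} ∪
      {s : Finset X | ↑s ⊆ Bᶜ ∧ ∀ x ∈ s, ∀ y ∈ s, (x, y) ∈ U ∩ Bᶜ ×ˢ Bᶜ} := by
  ext s
  simp only [Set.mem_setOf_eq, Set.mem_union]
  constructor
  · intro h
    by_cases hB : ∃ b ∈ s, b ∈ B
    · obtain ⟨b, hbs, hbB⟩ := hB
      have hsA : ↑s ⊆ A := fun x hx => hUB ⟨b, hbB, h b hbs x hx⟩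
      exact Or.inl ⟨hsA, fun x hx y hy =>
        ⟨h x hx y hy, hsA hx, hsA hy⟩⟩
    · push_neg at hB
      exact Or.inr ⟨fun x hx => hB x hx, fun x hx y hy =>
        ⟨h x hx y hy, hB x hx, hB y hy⟩⟩
  · rintro (⟨-, h⟩ | ⟨-, h⟩) <;> exact fun x hx y hy => (h x hx y hy).1
end

section
/- For every r > 0, the Vietoris-Rips complex Σ^I_{U_r} of the unit interval I = [0,1] with relation U_r = {(s,t) : |s − t| < r} has trivial reduced simplicial homology in all degrees (is acyclic). -/
/-! Simplicial (Vietoris–Rips) homology of the clique complex of a relation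
`U ⊆ X × X`, built from ordered simplices with integer coefficients, together
with the induced maps coming from inclusions of relations and the resulting
inverse-limit Vietoris–Rips homology of a semi-uniform structure. -/

namespace VR

variable {X : Type*}

/-- Ordered `n`-simplices of the clique (Vietoris–Rips) complex of the relation `U`:
`(n+1)`-tuples of vertices that are pairwise related by `U`. -/
def Simp (U : Set (X × X)) (n : ℕ) : Type _ :=
  {σ : Fin (n + 1) → X // ∀ i j, (σ i, σ j) ∈ U}

/-- Simplicial `n`-chains with integer coefficients. -/
abbrev Chains (U : Set (X × X)) (n : ℕ) : Type _ := Simp U n →₀ ℤ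

/-- The `i`-th face of an ordered simplex. -/
def face (U : Set (X × X)) {n : ℕ} (i : Fin (n + 2)) (σ : Simp U (n + 1)) : Simp U n :=
  ⟨σ.1 ∘ i.succAbove, fun _ _ => σ.2 _ _⟩

/-- The simplicial boundary map. -/
noncomputable def bd (U : Set (X × X)) (n : ℕ) : Chains U (n + 1) →+ Chains U n :=
  Finsupp.liftAddHom fun σ => zmultiplesHom _
    (∑ i : Fin (n + 2), (-1 : ℤ) ^ (i : ℕ) • Finsupp.single (face U i σ) (1 : ℤ))

/-- The augmentation map on `0`-chains. -/
noncomputable def aug (U : Set (X × X)) : Chains U 0 →+ ℤ :=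
  Finsupp.liftAddHom fun _ => zmultiplesHom ℤ (1 : ℤ)

/-- Cycles (unreduced). -/
noncomputable def cycles (U : Set (X × X)) : (n : ℕ) → AddSubgroup (Chains U n)
  | 0 => ⊤
  | n + 1 => (bd U n).ker

/-- Reduced cycles (using the augmentation in degree `0`). -/
noncomputable def rcycles (U : Set (X × X)) : (n : ℕ) → AddSubgroup (Chains U n)
  | 0 => (aug U).ker
  | n + 1 => (bd U n).ker

/-- Boundaries. -/
noncomputable def bdries (U : Set (X × X)) (n : ℕ) : AddSubgroup (Chains U n) :=
  (bd U n).range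

/-- Simplicial homology of the clique complex of `U`. -/
noncomputable def H (U : Set (X × X)) (n : ℕ) : Type _ :=
  ↥(cycles U n) ⧸ (bdries U n).addSubgroupOf (cycles U n)

noncomputable instance (U : Set (X × X)) (n : ℕ) : AddCommGroup (H U n) :=
  inferInstanceAs (AddCommGroup (_ ⧸ _))

/-- Reduced simplicial homology of the clique complex of `U`. -/
noncomputable def redH (U : Set (X × X)) (n : ℕ) : Type _ :=
  ↥(rcycles U n) ⧸ (bdries U n).addSubgroupOf (rcycles U n)

noncomputable instance (U : Set (X × X)) (n : ℕ) : AddCommGroup (redH U n) :=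
  inferInstanceAs (AddCommGroup (_ ⧸ _))

/-- The chain map induced by an inclusion of relations `U ⊆ U'`. -/
noncomputable def chainsMap {U U' : Set (X × X)} (h : U ⊆ U') (n : ℕ) :
    Chains U n →+ Chains U' n :=
  Finsupp.mapDomain.addMonoidHom fun σ => ⟨σ.1, fun i j => h (σ.2 i j)⟩

lemma bd_comm {U U' : Set (X × X)} (h : U ⊆ U') (n : ℕ) (x : Chains U (n + 1)) :
    bd U' n (chainsMap h (n + 1) x) = chainsMap h n (bd U n x) := by
  induction x using Finsupp.induction_linear with
  | zero => simp
  | add a b ha hb => simp [map_add, ha, hb]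
  | single σ m =>
    show bd U' n (Finsupp.mapDomain _ (Finsupp.single σ m)) =
      Finsupp.mapDomain _ (bd U n (Finsupp.single σ m))
    erw [Finsupp.mapDomain_single]
    simp only [bd]
    erw [Finsupp.liftAddHom_apply_single, Finsupp.liftAddHom_apply_single]
    simp only [zmultiplesHom_apply]
    erw [← Finsupp.mapDomain.addMonoidHom_apply, map_zsmul, map_sum]
    congr 1
    refine Finset.sum_congr rfl fun i _ => ?_
    erw [map_zsmul, Finsupp.mapDomain.addMonoidHom_apply, Finsupp.mapDomain_single]
    rfl

lemma chainsMap_cycles {U U' : Set (X × X)} (h : U ⊆ U') (n : ℕ)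
    (x : ↥(cycles U n)) : chainsMap h n x.1 ∈ cycles U' n := by
  cases n with
  | zero => trivial
  | succ n =>
    have hx : bd U n x.1 = 0 := x.2
    show chainsMap h (n + 1) x.1 ∈ (bd U' n).ker
    rw [AddMonoidHom.mem_ker, bd_comm h n x.1, hx, map_zero]

/-- The induced map on cycles. -/
noncomputable def cyclesMap {U U' : Set (X × X)} (h : U ⊆ U') (n : ℕ) :
    ↥(cycles U n) →+ ↥(cycles U' n) :=
  AddMonoidHom.codRestrict ((chainsMap h n).comp (cycles U n).subtype) (cycles U' n)
    (fun x => chainsMap_cycles h n x)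

/-- The induced map on homology. -/
noncomputable def Hmap {U U' : Set (X × X)} (h : U ⊆ U') (n : ℕ) : H U n →+ H U' n :=
  QuotientAddGroup.map _ _ (cyclesMap h n) (by
    intro x hx
    rcases hx with ⟨y, hy⟩
    refine AddSubgroup.mem_comap.mpr ?_
    show chainsMap h n x.1 ∈ (bd U' n).range
    exact ⟨chainsMap h (n + 1) y, by rw [bd_comm h n y, hy]; rfl⟩)

/-- The Vietoris–Rips homology of a semi-uniform structure `F`, presented concretely
as the inverse limit (group of compatible families) of the homologies `H U n`
over `U ∈ F`, directed by inclusion. -/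
noncomputable def VRhomology (F : Set (Set (X × X))) (n : ℕ) :
    AddSubgroup ((U : F) → H U.1 n) where
  carrier := {x | ∀ (U U' : F) (h : U.1 ⊆ U'.1), Hmap h n (x U) = x U'}
  zero_mem' := by intro U U' h; simp
  add_mem' := by intro a b ha hb U U' h; simp [ha U U' h, hb U U' h]
  neg_mem' := by intro a ha U U' h; simp [ha U U' h]

end VR

/-! A reduced cycle of the Rips complex of `[0, 1]` at scale `r` involves finitely many
simplices, so all of them have diameter at most some `R < r`. Slide `[0, 1]` down onto `0`
through the non-expanding maps `t ↦ max (t - s) 0`, in steps of length less than `r - R`: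
consecutive stages are then contiguous maps from scale `R` to scale `r`, and the prism operator
makes contiguous maps chain homotopic. So the cycle is homologous to its image under the last,
constant stage, and a reduced cycle supported on a constant simplex is a boundary. -/

namespace VR

open Finset
open scoped Topology

variable {X : Type*} {U U' : Set (X × X)}

lemma val_succAbove {n : ℕ} (p : Fin (n + 1)) (i : Fin n) :
    (p.succAbove i : ℕ) = if (i : ℕ) < p then (i : ℕ) else (i : ℕ) + 1 := by
  simp [Fin.succAbove, Fin.lt_def, apply_ite Fin.val]

structure Contiguous (U U' : Set (X × X)) (f g : X → X) : Prop where
  ff : ∀ {s t : X}, (s, t) ∈ U → (f s, f t) ∈ U'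
  fg : ∀ {s t : X}, (s, t) ∈ U → (f s, g t) ∈ U'
  gf : ∀ {s t : X}, (s, t) ∈ U → (g s, f t) ∈ U'
  gg : ∀ {s t : X}, (s, t) ∈ U → (g s, g t) ∈ U'

section MapChains

variable (φ : X → X) (hφ : ∀ {s t : X}, (s, t) ∈ U → (φ s, φ t) ∈ U')

def Simp.map {n : ℕ} (σ : Simp U n) : Simp U' n :=
  ⟨φ ∘ σ.1, fun i j => hφ (σ.2 i j)⟩

noncomputable def mapChains (n : ℕ) : Chains U n →+ Chains U' n :=
  Finsupp.mapDomain.addMonoidHom (Simp.map φ hφ)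

lemma mapChains_single {n : ℕ} (σ : Simp U n) (m : ℤ) :
    mapChains φ hφ n (Finsupp.single σ m) = Finsupp.single (Simp.map φ hφ σ) m := by
  simp [mapChains]

lemma mapChains_congr {ψ : X → X} (hψ : ∀ {s t : X}, (s, t) ∈ U → (ψ s, ψ t) ∈ U')
    (h : ∀ t, φ t = ψ t) {n : ℕ} (x : Chains U n) : mapChains φ hφ n x = mapChains ψ hψ n x := by
  obtain rfl : φ = ψ := funext h
  rfl

lemma Simp.map_injective (hinj : Function.Injective φ) (n : ℕ) :
    Function.Injective (Simp.map φ hφ (n := n)) := fun _ _ h =>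
  Subtype.ext (funext fun i => hinj (congrFun (congrArg Subtype.val h) i))

lemma mapChains_injective (hinj : Function.Injective φ) (n : ℕ) :
    Function.Injective (mapChains φ hφ n) :=
  Finsupp.mapDomain_injective (Simp.map_injective φ hφ hinj n)

lemma bd_mapChains (n : ℕ) (x : Chains U (n + 1)) :
    bd U' n (mapChains φ hφ (n + 1) x) = mapChains φ hφ n (bd U n x) := by
  induction x using Finsupp.induction_linear with
  | zero => simp
  | add a b ha hb => simp [map_add, ha, hb]
  | single σ m =>
    simp only [mapChains_single, bd, Finsupp.liftAddHom_apply_single, zmultiplesHom_apply,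
      map_zsmul, map_sum]
    rfl

lemma aug_mapChains (x : Chains U 0) : aug U' (mapChains φ hφ 0 x) = aug U x := by
  induction x using Finsupp.induction_linear with
  | zero => simp
  | add a b ha hb => simp [map_add, ha, hb]
  | single σ m => simp [mapChains_single, aug]

lemma mapChains_mem_rcycles {n : ℕ} {x : Chains U n} (hx : x ∈ rcycles U n) :
    mapChains φ hφ n x ∈ rcycles U' n := by
  cases n with
  | zero => exact (aug_mapChains φ hφ x).trans hx
  | succ n =>
    show bd U' n _ = 0
    rw [bd_mapChains, show bd U n x = 0 from hx, map_zero]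

lemma mem_rcycles_of_mapChains_mem (hinj : Function.Injective φ) {n : ℕ} {x : Chains U n}
    (hx : mapChains φ hφ n x ∈ rcycles U' n) : x ∈ rcycles U n := by
  cases n with
  | zero => exact (aug_mapChains φ hφ x).symm.trans hx
  | succ n =>
    refine mapChains_injective φ hφ hinj n ?_
    rw [← bd_mapChains, map_zero]
    exact hx

end MapChains

section Prism

variable {f g : X → X} (hc : Contiguous U U' f g)

/-- The `i`-th simplex `(f σ₀, …, f σᵢ, g σᵢ, …, g σₙ)` of the prism over `σ` (the `min`s only
keep the indices in range). -/
def prism {n : ℕ} (σ : Simp U n) (i : Fin (n + 1)) : Simp U' (n + 1) :=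
  ⟨fun j => if (j : ℕ) ≤ i then f (σ.1 ⟨min j n, by omega⟩) else g (σ.1 ⟨min (j - 1) n, by omega⟩),
    fun j k => by
      dsimp only
      split_ifs
      exacts [hc.ff (σ.2 _ _), hc.fg (σ.2 _ _), hc.gf (σ.2 _ _), hc.gg (σ.2 _ _)]⟩

def splice {n : ℕ} (σ : Simp U n) (k : ℕ) : Simp U' n :=
  ⟨fun j => if (j : ℕ) < k then f (σ.1 j) else g (σ.1 j),
    fun j l => by
      dsimp only
      split_ifs
      exacts [hc.ff (σ.2 _ _), hc.fg (σ.2 _ _), hc.gf (σ.2 _ _), hc.gg (σ.2 _ _)]⟩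

lemma splice_zero {n : ℕ} (σ : Simp U n) : splice hc σ 0 = Simp.map g hc.gg σ :=
  Subtype.ext (funext fun j => by simp [splice, Simp.map])

lemma splice_of_le {n : ℕ} (σ : Simp U n) {k : ℕ} (hk : n + 1 ≤ k) :
    splice hc σ k = Simp.map f hc.ff σ :=
  Subtype.ext (funext fun j => by simp [splice, Simp.map, show (j : ℕ) < k by omega])

lemma face_prism_of_lt {n : ℕ} (σ : Simp U (n + 1)) (i : Fin (n + 2)) (j : Fin (n + 3))
    (i' : Fin (n + 1)) (j' : Fin (n + 2))
    (hij : (j : ℕ) < i) (hi : (i' : ℕ) + 1 = i) (hj : (j' : ℕ) = j) :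
    face U' j (prism hc σ i) = prism hc (face U j' σ) i' := by
  apply Subtype.ext; funext m
  show (prism hc σ i).1 (j.succAbove m) = (prism hc (face U j' σ) i').1 m
  simp only [prism, face, Function.comp, val_succAbove]
  split_ifs <;>
    first
      | (exfalso; omega)
      | (rw [if_pos (by omega : (m : ℕ) ≤ i')]
         congr 1; refine congrArg σ.1 (Fin.ext ?_)
         simp only [val_succAbove]
         split_ifs <;> omega)
      | (rw [if_neg (by omega : ¬ (m : ℕ) ≤ i')]
         congr 1; refine congrArg σ.1 (Fin.ext ?_)
         simp only [val_succAbove]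
         split_ifs <;> omega)

lemma face_prism_of_gt {n : ℕ} (σ : Simp U (n + 1)) (i : Fin (n + 2)) (j : Fin (n + 3))
    (i' : Fin (n + 1)) (j' : Fin (n + 2))
    (hij : (i : ℕ) + 1 < j) (hi : (i' : ℕ) = i) (hj : (j' : ℕ) + 1 = j) :
    face U' j (prism hc σ i) = prism hc (face U j' σ) i' := by
  apply Subtype.ext; funext m
  show (prism hc σ i).1 (j.succAbove m) = (prism hc (face U j' σ) i').1 m
  simp only [prism, face, Function.comp, val_succAbove]
  split_ifs <;>
    first
      | (exfalso; omega)
      | (rw [if_pos (by omega : (m : ℕ) ≤ i')]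
         congr 1; refine congrArg σ.1 (Fin.ext ?_)
         simp only [val_succAbove]
         split_ifs <;> omega)
      | (rw [if_neg (by omega : ¬ (m : ℕ) ≤ i')]
         congr 1; refine congrArg σ.1 (Fin.ext ?_)
         simp only [val_succAbove]
         split_ifs <;> omega)

lemma face_prism_self {n : ℕ} (σ : Simp U n) (i : Fin (n + 1)) (j : Fin (n + 2))
    (hj : (j : ℕ) = i) : face U' j (prism hc σ i) = splice hc σ i := by
  apply Subtype.ext; funext m
  show (prism hc σ i).1 (j.succAbove m) = (splice hc σ i).1 m
  simp only [prism, splice, val_succAbove, hj]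
  split_ifs <;>
    first
      | (exfalso; omega)
      | (congr 1; refine congrArg σ.1 (Fin.ext ?_); simp only; omega)

lemma face_prism_succ {n : ℕ} (σ : Simp U n) (i : Fin (n + 1)) (j : Fin (n + 2))
    (hj : (j : ℕ) = i + 1) : face U' j (prism hc σ i) = splice hc σ (i + 1) := by
  apply Subtype.ext; funext m
  show (prism hc σ i).1 (j.succAbove m) = (splice hc σ (i + 1)).1 m
  simp only [prism, splice, val_succAbove, hj]
  split_ifs <;>
    first
      | (exfalso; omega)
      | (congr 1; refine congrArg σ.1 (Fin.ext ?_); simp only; omega)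

noncomputable def prismOp (n : ℕ) : Chains U n →+ Chains U' (n + 1) :=
  Finsupp.liftAddHom fun σ => zmultiplesHom _
    (∑ i : Fin (n + 1), (-1 : ℤ) ^ (i : ℕ) • Finsupp.single (prism hc σ i) (1 : ℤ))

lemma prismOp_single {n : ℕ} (σ : Simp U n) :
    prismOp hc n (Finsupp.single σ 1) =
      ∑ i : Fin (n + 1), (-1 : ℤ) ^ (i : ℕ) • Finsupp.single (prism hc σ i) (1 : ℤ) := by
  simp [prismOp]

omit hc in
lemma bd_single {n : ℕ} (τ : Simp U' (n + 1)) :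
    bd U' n (Finsupp.single τ 1) =
      ∑ j : Fin (n + 2), (-1 : ℤ) ^ (j : ℕ) • Finsupp.single (face U' j τ) (1 : ℤ) := by
  simp [bd]

/-! The terms of `∂ (prismOp σ)` and of `prismOp (∂ σ)`, indexed by natural numbers so that
the cancellations become reindexings of `Finset.range` sums. -/

noncomputable def bdPrismTerm {n : ℕ} (σ : Simp U (n + 1)) (i j : ℕ) : Chains U' (n + 1) :=
  if h : i < n + 2 ∧ j < n + 3 then
    (-1 : ℤ) ^ (i + j) • Finsupp.single (face U' ⟨j, h.2⟩ (prism hc σ ⟨i, h.1⟩)) (1 : ℤ)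
  else 0

noncomputable def prismBdTerm {n : ℕ} (σ : Simp U (n + 1)) (i j : ℕ) : Chains U' (n + 1) :=
  if h : i < n + 1 ∧ j < n + 2 then
    (-1 : ℤ) ^ (i + j) • Finsupp.single (prism hc (face U ⟨j, h.2⟩ σ) ⟨i, h.1⟩) (1 : ℤ)
  else 0

noncomputable def spliceChain {n : ℕ} (σ : Simp U n) (k : ℕ) : Chains U' n :=
  Finsupp.single (splice hc σ k) 1

lemma bdPrismTerm_of_lt {n : ℕ} (σ : Simp U (n + 1)) {i j : ℕ} (hi : i < n + 2) (hj : j < i) :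
    bdPrismTerm hc σ i j = -prismBdTerm hc σ (i - 1) j := by
  rw [bdPrismTerm, dif_pos ⟨hi, by omega⟩, prismBdTerm, dif_pos ⟨by omega, by omega⟩,
    face_prism_of_lt hc σ ⟨i, hi⟩ ⟨j, by omega⟩ ⟨i - 1, by omega⟩ ⟨j, by omega⟩
      (by simpa using hj) (by simp; omega) (by simp),
    show i + j = (i - 1 + j) + 1 by omega, pow_succ, mul_smul, neg_one_smul, smul_neg]

lemma bdPrismTerm_of_gt {n : ℕ} (σ : Simp U (n + 1)) {i j : ℕ} (hi : i < n + 2)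
    (hij : i + 1 < j) (hj : j < n + 3) :
    bdPrismTerm hc σ i j = -prismBdTerm hc σ i (j - 1) := by
  rw [bdPrismTerm, dif_pos ⟨hi, hj⟩, prismBdTerm, dif_pos ⟨by omega, by omega⟩,
    face_prism_of_gt hc σ ⟨i, hi⟩ ⟨j, hj⟩ ⟨i, by omega⟩ ⟨j - 1, by omega⟩
      (by simpa using hij) (by simp) (by simp; omega),
    show i + j = (i + (j - 1)) + 1 by omega, pow_succ, mul_smul, neg_one_smul, smul_neg]

lemma bdPrismTerm_self {n : ℕ} (σ : Simp U (n + 1)) {i : ℕ} (hi : i < n + 2) :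
    bdPrismTerm hc σ i i = spliceChain hc σ i := by
  rw [bdPrismTerm, dif_pos ⟨hi, by omega⟩, face_prism_self hc σ ⟨i, hi⟩ ⟨i, by omega⟩ rfl,
    Even.neg_one_pow ⟨i, rfl⟩, one_smul]
  rfl

lemma bdPrismTerm_succ {n : ℕ} (σ : Simp U (n + 1)) {i : ℕ} (hi : i < n + 2) :
    bdPrismTerm hc σ i (i + 1) = -spliceChain hc σ (i + 1) := by
  rw [bdPrismTerm, dif_pos ⟨hi, by omega⟩, face_prism_succ hc σ ⟨i, hi⟩ ⟨i + 1, by omega⟩ rfl,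
    Odd.neg_one_pow ⟨i, by omega⟩, neg_one_smul]
  rfl

lemma sum_bdPrismTerm_row {n : ℕ} (σ : Simp U (n + 1)) {i : ℕ} (hi : i < n + 2) :
    ∑ j ∈ range (n + 3), bdPrismTerm hc σ i j
      = (spliceChain hc σ i - spliceChain hc σ (i + 1))
        - ((∑ j ∈ Ico 0 i, prismBdTerm hc σ (i - 1) j)
          + ∑ j ∈ Ico (i + 1) (n + 2), prismBdTerm hc σ i j) := by
  rw [range_eq_Ico, ← sum_Ico_consecutive _ (Nat.zero_le i) (by omega : i ≤ n + 3),
    sum_eq_sum_Ico_succ_bot (by omega : i < n + 3),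
    sum_eq_sum_Ico_succ_bot (by omega : i + 1 < n + 3)]
  have below : ∑ j ∈ Ico 0 i, bdPrismTerm hc σ i j
      = -∑ j ∈ Ico 0 i, prismBdTerm hc σ (i - 1) j := by
    rw [← sum_neg_distrib]
    exact sum_congr rfl fun j hj => bdPrismTerm_of_lt hc σ hi (mem_Ico.mp hj).2
  have above : ∑ j ∈ Ico (i + 2) (n + 3), bdPrismTerm hc σ i j
      = -∑ j ∈ Ico (i + 1) (n + 2), prismBdTerm hc σ i j := by
    rw [← sum_neg_distrib, sum_Ico_eq_sum_range, sum_Ico_eq_sum_range,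
      show n + 3 - (i + 2) = n + 2 - (i + 1) by omega]
    refine sum_congr rfl fun k hk => ?_
    rw [mem_range] at hk
    rw [bdPrismTerm_of_gt hc σ hi (by omega) (by omega)]
    congr 2
    omega
  rw [below, bdPrismTerm_self hc σ hi, bdPrismTerm_succ hc σ hi, above]
  abel

/-- In the `i`-th row the diagonal terms leave `splice i - splice (i + 1)`, which telescopes;
the off-diagonal terms are exactly the terms of `prismOp (∂ σ)`, with the opposite sign. -/
lemma sum_bdPrismTerm {n : ℕ} (σ : Simp U (n + 1)) :
    ∑ i ∈ range (n + 2), ∑ j ∈ range (n + 3), bdPrismTerm hc σ i j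
      = spliceChain hc σ 0 - spliceChain hc σ (n + 2)
        - ∑ j ∈ range (n + 2), ∑ i ∈ range (n + 1), prismBdTerm hc σ i j := by
  rw [sum_congr rfl fun i hi => sum_bdPrismTerm_row hc σ (mem_range.mp hi), sum_sub_distrib,
    sum_range_sub' (spliceChain hc σ) (n + 2)]
  congr 1
  rw [sum_add_distrib, sum_range_succ' (fun i => ∑ j ∈ Ico 0 i, prismBdTerm hc σ (i - 1) j),
    sum_range_succ (fun i => ∑ j ∈ Ico (i + 1) (n + 2), prismBdTerm hc σ i j)]
  simp only [Ico_self, sum_empty, add_zero, Nat.add_sub_cancel]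
  rw [sum_comm (s := range (n + 2)), ← sum_add_distrib]
  refine sum_congr rfl fun i hi => ?_
  rw [mem_range] at hi
  rw [sum_Ico_consecutive _ (Nat.zero_le (i + 1)) (by omega : i + 1 ≤ n + 2), range_eq_Ico]

lemma bd_prismOp_single {n : ℕ} (σ : Simp U (n + 1)) :
    bd U' (n + 1) (prismOp hc (n + 1) (Finsupp.single σ 1)) =
      mapChains g hc.gg (n + 1) (Finsupp.single σ 1)
        - mapChains f hc.ff (n + 1) (Finsupp.single σ 1)
        - prismOp hc n (bd U n (Finsupp.single σ 1)) := by
  have hg : mapChains g hc.gg (n + 1) (Finsupp.single σ 1) = spliceChain hc σ 0 := by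
    rw [mapChains_single, spliceChain, splice_zero]
  have hf : mapChains f hc.ff (n + 1) (Finsupp.single σ 1) = spliceChain hc σ (n + 2) := by
    rw [mapChains_single, spliceChain, splice_of_le hc σ le_rfl]
  have hbd : prismOp hc n (bd U n (Finsupp.single σ 1))
      = ∑ j ∈ range (n + 2), ∑ i ∈ range (n + 1), prismBdTerm hc σ i j := by
    rw [bd_single, map_sum, ← Fin.sum_univ_eq_sum_range]
    refine sum_congr rfl fun j _ => ?_
    rw [map_zsmul, prismOp_single, smul_sum, ← Fin.sum_univ_eq_sum_range]
    refine sum_congr rfl fun i _ => ?_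
    rw [prismBdTerm, dif_pos ⟨i.isLt, j.isLt⟩, pow_add, mul_smul, smul_comm]
  rw [hg, hf, hbd, prismOp_single, map_sum, ← sum_bdPrismTerm, ← Fin.sum_univ_eq_sum_range]
  refine sum_congr rfl fun i _ => ?_
  rw [map_zsmul, bd_single, smul_sum, ← Fin.sum_univ_eq_sum_range]
  refine sum_congr rfl fun j _ => ?_
  rw [bdPrismTerm, dif_pos ⟨i.isLt, j.isLt⟩, pow_add, mul_smul]

lemma bd_prismOp {n : ℕ} (x : Chains U (n + 1)) :
    bd U' (n + 1) (prismOp hc (n + 1) x) =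
      mapChains g hc.gg (n + 1) x - mapChains f hc.ff (n + 1) x - prismOp hc n (bd U n x) := by
  induction x using Finsupp.induction_linear with
  | zero => simp
  | add a b ha hb =>
    simp only [map_add, ha, hb]
    abel
  | single σ m =>
    rw [← mul_one m, ← smul_eq_mul, ← Finsupp.smul_single]
    simp only [map_zsmul, bd_prismOp_single, smul_sub]

lemma bd_prismOp_zero (x : Chains U 0) :
    bd U' 0 (prismOp hc 0 x) = mapChains g hc.gg 0 x - mapChains f hc.ff 0 x := by
  induction x using Finsupp.induction_linear with
  | zero => simp
  | add a b ha hb =>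
    simp only [map_add, ha, hb]
    abel
  | single σ m =>
    rw [← mul_one m, ← smul_eq_mul, ← Finsupp.smul_single]
    rw [map_zsmul, map_zsmul, map_zsmul, map_zsmul, ← smul_sub, prismOp_single, Fin.sum_univ_one,
      Fin.val_zero, pow_zero, one_smul, bd_single, Fin.sum_univ_two,
      face_prism_self hc σ 0 0 rfl, face_prism_succ hc σ 0 1 rfl]
    simp only [Fin.val_zero, zero_add]
    rw [splice_zero, splice_of_le hc σ le_rfl, mapChains_single, mapChains_single]
    simp [sub_eq_add_neg]

theorem Contiguous.sub_mem_bdries {n : ℕ} {x : Chains U n} (hx : x ∈ cycles U n) :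
    mapChains g hc.gg n x - mapChains f hc.ff n x ∈ bdries U' n := by
  cases n with
  | zero => exact ⟨prismOp hc 0 x, bd_prismOp_zero hc x⟩
  | succ n =>
    refine ⟨prismOp hc (n + 1) x, ?_⟩
    rw [bd_prismOp, show bd U n x = 0 from hx, map_zero, sub_zero]

end Prism

lemma rcycles_le_cycles (U : Set (X × X)) : ∀ n, rcycles U n ≤ cycles U n
  | 0 => le_top
  | _ + 1 => le_rfl

lemma subsingleton_redH_of_rcycles_le_bdries {n : ℕ} (h : rcycles U n ≤ bdries U n) :
    Subsingleton (redH U n) := by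
  have htop : (bdries U n).addSubgroupOf (rcycles U n) = ⊤ :=
    (AddSubgroup.eq_top_iff' _).mpr fun y => AddSubgroup.mem_addSubgroupOf.mpr (h y.2)
  show Subsingleton (_ ⧸ _)
  rw [htop]
  exact QuotientAddGroup.subsingleton_quotient_top

lemma sub_mem_bdries_of_contiguous_succ (F : ℕ → X → X)
    (hF : ∀ k, Contiguous U U' (F k) (F (k + 1))) {n : ℕ} {x : Chains U n}
    (hx : x ∈ cycles U n) (N : ℕ) :
    mapChains (F N) (hF N).ff n x - mapChains (F 0) (hF 0).ff n x ∈ bdries U' n := by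
  induction N with
  | zero => simp
  | succ N ih =>
    convert add_mem ((hF N).sub_mem_bdries hx) ih using 1
    abel

lemma exists_mapChains_id_eq {V : Set (X × X)} (hVU : V ⊆ U) {n : ℕ} (x : Chains U n)
    (hx : ∀ σ ∈ x.support, ∀ i j, (σ.1 i, σ.1 j) ∈ V) :
    ∃ x' : Chains V n, mapChains id (fun h => hVU h) n x' = x := by
  have hinj := Simp.map_injective id (fun h => hVU h) Function.injective_id n
  exact ⟨_, Finsupp.mapDomain_comapDomain _ hinj x fun σ hσ => ⟨⟨σ.1, hx σ hσ⟩, rfl⟩⟩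

section Constant

def constSimp (U : Set (X × X)) (v : X) (hv : (v, v) ∈ U) (n : ℕ) : Simp U n :=
  ⟨fun _ => v, fun _ _ => hv⟩

variable {v : X} (hv : (v, v) ∈ U)

lemma bd_single_constSimp (n : ℕ) (c : ℤ) :
    bd U n (Finsupp.single (constSimp U v hv (n + 1)) c)
      = if Even n then 0 else Finsupp.single (constSimp U v hv n) c := by
  have hface : ∀ i : Fin (n + 2), face U i (constSimp U v hv (n + 1)) = constSimp U v hv n :=
    fun _ => rfl
  rw [bd, Finsupp.liftAddHom_apply_single, zmultiplesHom_apply]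
  simp only [hface, ← sum_smul]
  rw [Fin.sum_univ_eq_sum_range (fun i => (-1 : ℤ) ^ i) (n + 2), neg_one_geom_sum]
  by_cases hn : Even n
  · simp [hn, Nat.even_add_one]
  · simp [hn, Nat.even_add_one, Finsupp.smul_single]

lemma mem_bdries_of_support_subset_constSimp {n : ℕ} {y : Chains U n} (hy : y ∈ rcycles U n)
    (hsupp : y.support ⊆ {constSimp U v hv n}) : y ∈ bdries U n := by
  obtain ⟨c, rfl⟩ := Finsupp.support_subset_singleton'.mp hsupp
  cases n with
  | zero =>
    have hc : c = 0 := by simpa [rcycles, aug] using hy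
    simp [hc, zero_mem]
  | succ n =>
    rcases Nat.even_or_odd n with hn | hn
    · refine ⟨Finsupp.single (constSimp U v hv (n + 2)) c, ?_⟩
      rw [bd_single_constSimp, if_neg (Nat.not_even_iff_odd.mpr hn.add_one)]
    · have hc : bd U n (Finsupp.single (constSimp U v hv (n + 1)) c) = 0 := hy
      rw [bd_single_constSimp, if_neg (Nat.not_even_iff_odd.mpr hn),
        Finsupp.single_eq_zero] at hc
      simp [hc, zero_mem]

lemma support_mapChains_subset_constSimp {φ : X → X}
    (hφ : ∀ {s t : X}, (s, t) ∈ U' → (φ s, φ t) ∈ U) (hφv : ∀ t, φ t = v) {n : ℕ}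
    (x : Chains U' n) : (mapChains φ hφ n x).support ⊆ {constSimp U v hv n} := by
  classical
  refine Finsupp.mapDomain_support.trans fun σ hσ => ?_
  obtain ⟨τ, -, rfl⟩ := mem_image.mp hσ
  exact mem_singleton.mpr (Subtype.ext (funext fun _ => hφv _))

end Constant

section Rips

variable [PseudoMetricSpace X]

lemma contiguous_of_dist_le {f g : X → X} {R δ r : ℝ} (hf : ∀ a b, dist (f a) (f b) ≤ dist a b)
    (hg : ∀ a b, dist (g a) (g b) ≤ dist a b) (hfg : ∀ t, dist (f t) (g t) ≤ δ) (hr : R + δ < r) :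
    Contiguous {p : X × X | dist p.1 p.2 ≤ R} {p : X × X | dist p.1 p.2 < r} f g := by
  have hδ : ∀ t : X, 0 ≤ δ := fun t => dist_nonneg.trans (hfg t)
  refine ⟨fun {s t} (h : dist s t ≤ R) => ?_, fun {s t} (h : dist s t ≤ R) => ?_,
    fun {s t} (h : dist s t ≤ R) => ?_, fun {s t} (h : dist s t ≤ R) => ?_⟩ <;>
    show dist _ _ < r
  · linarith [hf s t, hδ s]
  · linarith [dist_triangle (f s) (f t) (g t), hf s t, hfg t]
  · linarith [dist_triangle (g s) (f s) (f t), dist_comm (g s) (f s), hfg s, hf s t]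
  · linarith [hg s t, hδ s]

lemma exists_lt_forall_dist_le {r : ℝ} {n : ℕ} (x : Chains {p : X × X | dist p.1 p.2 < r} n) :
    ∃ R < r, ∀ σ ∈ x.support, ∀ i j, dist (σ.1 i) (σ.1 j) ≤ R := by
  have h : ∀ᶠ R in 𝓝[<] r, ∀ σ ∈ x.support, ∀ i j, dist (σ.1 i) (σ.1 j) ≤ R :=
    (Filter.eventually_all_finset _).mpr fun σ _ => Filter.eventually_all.mpr fun i =>
      Filter.eventually_all.mpr fun j =>
        eventually_nhdsWithin_of_eventually_nhds (eventually_ge_nhds (σ.2 i j))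
  obtain ⟨R, hR, hRr⟩ := (h.and self_mem_nhdsWithin).exists
  exact ⟨R, hRr, hR⟩

theorem rcycles_le_bdries_of_contraction {r : ℝ} (hr : 0 < r) (H : ℝ → X → X) (v : X) (L : ℝ)
    (h0 : ∀ t, H 0 t = t) (h1 : ∀ t, H 1 t = v) (hH : ∀ s a b, dist (H s a) (H s b) ≤ dist a b)
    (hL : ∀ s s' t, dist (H s t) (H s' t) ≤ L * |s - s'|) (n : ℕ) :
    rcycles {p : X × X | dist p.1 p.2 < r} n ≤ bdries {p : X × X | dist p.1 p.2 < r} n := by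
  intro x hx
  obtain ⟨R, hRr, hR⟩ := exists_lt_forall_dist_le x
  have hVU : {p : X × X | dist p.1 p.2 ≤ R} ⊆ {p : X × X | dist p.1 p.2 < r} :=
    fun p hp => lt_of_le_of_lt hp hRr
  obtain ⟨x', rfl⟩ := exists_mapChains_id_eq hVU x hR
  have hx' := mem_rcycles_of_mapChains_mem id _ Function.injective_id hx
  obtain ⟨N, hN⟩ := exists_nat_gt (L / (r - R))
  have hN1 : (0 : ℝ) < N + 1 := by positivity
  have hδ : R + L / (N + 1) < r := by
    rw [div_lt_iff₀ (sub_pos.mpr hRr)] at hN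
    have : L / (N + 1) < r - R := by rw [div_lt_iff₀ hN1]; nlinarith
    linarith
  let F : ℕ → X → X := fun k => H (k / (N + 1))
  have hF : ∀ k, Contiguous {p : X × X | dist p.1 p.2 ≤ R} {p : X × X | dist p.1 p.2 < r}
      (F k) (F (k + 1)) := fun k =>
    contiguous_of_dist_le (hH _) (hH _) (fun t => (hL _ _ t).trans_eq (by
        rw [Nat.cast_succ, ← sub_div, sub_add_cancel_left, abs_div, abs_neg, abs_one,
          abs_of_pos hN1, mul_one_div])) hδ
  have hstep := sub_mem_bdries_of_contiguous_succ F hF (rcycles_le_cycles _ n hx') (N + 1)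
  have hstart : mapChains (F 0) (hF 0).ff n x' = mapChains id (fun h => hVU h) n x' :=
    mapChains_congr _ _ _ (fun t => by simp [F, h0]) x'
  have hend : mapChains (F (N + 1)) (hF (N + 1)).ff n x' ∈ bdries _ n :=
    mem_bdries_of_support_subset_constSimp (show dist v v < r by simpa using hr)
      (mapChains_mem_rcycles _ _ hx')
      (support_mapChains_subset_constSimp _ _ (fun t => by simp [F, hN1.ne', h1]) x')
  rw [hstart] at hstep
  simpa using sub_mem hend hstep

end Rips

end VR

open VR in
/-- For every `r > 0`, the Vietoris–Rips (clique) complex of the unit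
interval `I = [0,1]` with the relation `U_r = {(s,t) | |s − t| < r}` is acyclic:
all reduced simplicial homology groups vanish. -/
theorem stmt16 (r : ℝ) (hr : 0 < r) :
    ∀ n : ℕ, Subsingleton
      (redH {p : unitInterval × unitInterval | |p.1.1 - p.2.1| < r} n) := by
  intro n
  refine subsingleton_redH_of_rcycles_le_bdries
    (rcycles_le_bdries_of_contraction hr (fun s t => Set.projIcc 0 1 zero_le_one ((t : ℝ) - s)) 0 1
      (fun t => by simp) (fun t => Set.projIcc_of_le_left _ (by linarith [t.2.2]))
      (fun s a b => ?_) (fun s s' t => ?_) n)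
  · exact (Set.abs_projIcc_sub_projIcc _).trans_eq (by rw [sub_sub_sub_cancel_right]; rfl)
  · rw [one_mul, abs_sub_comm s]
    exact (Set.abs_projIcc_sub_projIcc _).trans_eq (by rw [sub_sub_sub_cancel_left])
end
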